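/- arXiv:2309.16582 — 5 statements merged into one kernel-verified Lean document; each statement's English description precedes it below -/
import Mathlib

section
/- Let V, W1, W2, W3 be finite-dimensional complex vector spaces. Define W on End(V)^3 × ∏_{k=1}^{3} Hom(W_k,V) × ∏_{k=1}^{3} Hom(V,W_k) by W(B1,B2,B3,I1,I2,I3,J1,J2,J3) = tr(B1∘(B2∘B3 − B3∘B2)) + Σ_{k=1}^{3} tr(B_k∘I_k∘J_k). Then the point (B1,B2,B3,I1,I2,I3,J1,J2,J3) is a critical point of W if and only if B2∘B3 − B3∘B2 + I1∘J1 = 0, B3∘B1 − B1∘B3 + I2∘J2 = 0, B1∘B2 − B2∘B1 + I3∘J3 = 0, and J_k∘B_k = 0 and B_k∘I_k = 0 for each k = 1,2,3. -/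
/-!
Along every line `t ↦ x + t • v` the potential is a cubic polynomial in `t`, so its derivative
at `0` is the linear coefficient. Cyclicity of the trace rewrites that coefficient as the trace
pairing of `v` with the nine maps `[B₂,B₃] + I₁J₁`, `[B₃,B₁] + I₂J₂`, `[B₁,B₂] + I₃J₃`, `JₖBₖ`,
`BₖIₖ`. The trace pairing `Hom(M,N) × Hom(N,M) → ℂ` is nondegenerate, so all directional
derivatives vanish exactly when these nine maps do.
-/

open LinearMap

namespace LinearMap

variable {R M N : Type*} [CommRing R] [AddCommGroup M] [Module R M]
  [AddCommGroup N] [Module R N] [Module.Free R N] [Module.Finite R N]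

/-- Testing against the rank-one maps `ψ.smulRight m` turns the trace pairing into `ψ (f m)`. -/
theorem forall_trace_comp_eq_zero_iff (f : M →ₗ[R] N) :
    (∀ g : N →ₗ[R] M, trace R N (f ∘ₗ g) = 0) ↔ f = 0 := by
  refine ⟨fun h => ext fun m => ?_, fun hf g => by simp [hf]⟩
  refine (Module.forall_dual_apply_eq_zero_iff R (f m)).1 fun ψ => ?_
  have hrank_one : f ∘ₗ ψ.smulRight m = ψ.smulRight (f m) := by ext; simp
  simpa [hrank_one] using h (ψ.smulRight m)

end LinearMap

section Derivative

variable {𝕜 : Type*} [NontriviallyNormedField 𝕜]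

theorem hasDerivAt_cubic_zero (a b c d : 𝕜) :
    HasDerivAt (fun t => a + t * b + t ^ 2 * c + t ^ 3 * d) b 0 := by
  simpa using ((((hasDerivAt_const (0 : 𝕜) a).fun_add
    ((hasDerivAt_id' (0 : 𝕜)).mul_const b)).fun_add ((hasDerivAt_pow 2 (0 : 𝕜)).mul_const c)).fun_add
    ((hasDerivAt_pow 3 (0 : 𝕜)).mul_const d))

variable {M N P : Type*} [AddCommGroup M] [Module 𝕜 M] [FiniteDimensional 𝕜 M]
  [AddCommGroup N] [Module 𝕜 N] [FiniteDimensional 𝕜 N]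
  [AddCommGroup P] [Module 𝕜 P] [FiniteDimensional 𝕜 P]

theorem hasDerivAt_trace_comp_comp_line (X X' : P →ₗ[𝕜] M) (Y Y' : N →ₗ[𝕜] P)
    (Z Z' : M →ₗ[𝕜] N) :
    HasDerivAt (fun t : 𝕜 => trace 𝕜 M ((X + t • X') ∘ₗ (Y + t • Y') ∘ₗ (Z + t • Z')))
      (trace 𝕜 P ((Y ∘ₗ Z) ∘ₗ X') + trace 𝕜 N ((Z ∘ₗ X) ∘ₗ Y') + trace 𝕜 M ((X ∘ₗ Y) ∘ₗ Z'))
      0 := by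
  convert hasDerivAt_cubic_zero (trace 𝕜 M (X ∘ₗ Y ∘ₗ Z))
    (trace 𝕜 M (X' ∘ₗ Y ∘ₗ Z) + trace 𝕜 M (X ∘ₗ Y' ∘ₗ Z) + trace 𝕜 M (X ∘ₗ Y ∘ₗ Z'))
    (trace 𝕜 M (X' ∘ₗ Y' ∘ₗ Z) + trace 𝕜 M (X' ∘ₗ Y ∘ₗ Z') + trace 𝕜 M (X ∘ₗ Y' ∘ₗ Z'))
    (trace 𝕜 M (X' ∘ₗ Y' ∘ₗ Z')) using 1
  · funext t
    simp only [add_comp, comp_add, smul_comp, comp_smul, map_add, map_smul, smul_eq_mul]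
    ring
  · rw [trace_comp_comm' (Y ∘ₗ Z) X']
    congr 2
    exact (trace_comp_comm' Z (X ∘ₗ Y')).symm

end Derivative

section SpikedInstanton

variable {𝕜 V W₁ W₂ W₃ : Type*}

noncomputable def spikedPotential [CommRing 𝕜] [AddCommGroup V] [Module 𝕜 V]
    [AddCommGroup W₁] [Module 𝕜 W₁] [AddCommGroup W₂] [Module 𝕜 W₂]
    [AddCommGroup W₃] [Module 𝕜 W₃] (B₁ B₂ B₃ : Module.End 𝕜 V)
    (I₁ : W₁ →ₗ[𝕜] V) (I₂ : W₂ →ₗ[𝕜] V) (I₃ : W₃ →ₗ[𝕜] V)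
    (J₁ : V →ₗ[𝕜] W₁) (J₂ : V →ₗ[𝕜] W₂) (J₃ : V →ₗ[𝕜] W₃) : 𝕜 :=
  trace 𝕜 V (B₁ ∘ₗ (B₂ ∘ₗ B₃ - B₃ ∘ₗ B₂)) + trace 𝕜 V ((B₁ ∘ₗ I₁) ∘ₗ J₁)
    + trace 𝕜 V ((B₂ ∘ₗ I₂) ∘ₗ J₂) + trace 𝕜 V ((B₃ ∘ₗ I₃) ∘ₗ J₃)

variable [NontriviallyNormedField 𝕜] [AddCommGroup V] [Module 𝕜 V] [FiniteDimensional 𝕜 V]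
  [AddCommGroup W₁] [Module 𝕜 W₁] [FiniteDimensional 𝕜 W₁]
  [AddCommGroup W₂] [Module 𝕜 W₂] [FiniteDimensional 𝕜 W₂]
  [AddCommGroup W₃] [Module 𝕜 W₃] [FiniteDimensional 𝕜 W₃]

theorem hasDerivAt_spikedPotential_line (B₁ B₂ B₃ C₁ C₂ C₃ : Module.End 𝕜 V)
    (I₁ K₁ : W₁ →ₗ[𝕜] V) (I₂ K₂ : W₂ →ₗ[𝕜] V) (I₃ K₃ : W₃ →ₗ[𝕜] V)
    (J₁ L₁ : V →ₗ[𝕜] W₁) (J₂ L₂ : V →ₗ[𝕜] W₂) (J₃ L₃ : V →ₗ[𝕜] W₃) :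
    HasDerivAt (fun t : 𝕜 => spikedPotential (B₁ + t • C₁) (B₂ + t • C₂) (B₃ + t • C₃)
        (I₁ + t • K₁) (I₂ + t • K₂) (I₃ + t • K₃) (J₁ + t • L₁) (J₂ + t • L₂) (J₃ + t • L₃))
      (trace 𝕜 V ((B₂ ∘ₗ B₃ - B₃ ∘ₗ B₂ + I₁ ∘ₗ J₁) ∘ₗ C₁)
        + trace 𝕜 V ((B₃ ∘ₗ B₁ - B₁ ∘ₗ B₃ + I₂ ∘ₗ J₂) ∘ₗ C₂)
        + trace 𝕜 V ((B₁ ∘ₗ B₂ - B₂ ∘ₗ B₁ + I₃ ∘ₗ J₃) ∘ₗ C₃)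
        + trace 𝕜 W₁ ((J₁ ∘ₗ B₁) ∘ₗ K₁) + trace 𝕜 W₂ ((J₂ ∘ₗ B₂) ∘ₗ K₂)
        + trace 𝕜 W₃ ((J₃ ∘ₗ B₃) ∘ₗ K₃)
        + trace 𝕜 V ((B₁ ∘ₗ I₁) ∘ₗ L₁) + trace 𝕜 V ((B₂ ∘ₗ I₂) ∘ₗ L₂)
        + trace 𝕜 V ((B₃ ∘ₗ I₃) ∘ₗ L₃)) 0 := by
  refine ((((((hasDerivAt_trace_comp_comp_line B₁ C₁ B₂ C₂ B₃ C₃).fun_sub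
    (hasDerivAt_trace_comp_comp_line B₁ C₁ B₃ C₃ B₂ C₂)).fun_add
    (hasDerivAt_trace_comp_comp_line B₁ C₁ I₁ K₁ J₁ L₁)).fun_add
    (hasDerivAt_trace_comp_comp_line B₂ C₂ I₂ K₂ J₂ L₂)).fun_add
    (hasDerivAt_trace_comp_comp_line B₃ C₃ I₃ K₃ J₃ L₃)).congr_deriv ?_).congr_of_eventuallyEq
    (.of_forall fun t => ?_)
  · simp only [add_comp, sub_comp, map_add, map_sub]
    ring
  · simp only [spikedPotential, comp_sub, map_sub]
    rfl

end SpikedInstanton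

/-- Nekrasov's spiked-instanton quiver with potential
`W = tr(B₁[B₂,B₃]) + Σₖ tr(Bₖ∘Iₖ∘Jₖ)`: a point is critical (every directional derivative
vanishes) iff `[B₂,B₃] + I₁∘J₁ = 0`, `[B₃,B₁] + I₂∘J₂ = 0`, `[B₁,B₂] + I₃∘J₃ = 0`, and
`Jₖ∘Bₖ = 0`, `Bₖ∘Iₖ = 0` for `k = 1,2,3`. -/
theorem critical_points_of_spiked_instanton_potential
    (V W₁ W₂ W₃ : Type*) [AddCommGroup V] [Module ℂ V] [FiniteDimensional ℂ V]
    [AddCommGroup W₁] [Module ℂ W₁] [FiniteDimensional ℂ W₁]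
    [AddCommGroup W₂] [Module ℂ W₂] [FiniteDimensional ℂ W₂]
    [AddCommGroup W₃] [Module ℂ W₃] [FiniteDimensional ℂ W₃]
    (B₁ B₂ B₃ : Module.End ℂ V)
    (I₁ : W₁ →ₗ[ℂ] V) (I₂ : W₂ →ₗ[ℂ] V) (I₃ : W₃ →ₗ[ℂ] V)
    (J₁ : V →ₗ[ℂ] W₁) (J₂ : V →ₗ[ℂ] W₂) (J₃ : V →ₗ[ℂ] W₃) :
    (∀ (C₁ C₂ C₃ : Module.End ℂ V)
        (K₁ : W₁ →ₗ[ℂ] V) (K₂ : W₂ →ₗ[ℂ] V) (K₃ : W₃ →ₗ[ℂ] V)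
        (L₁ : V →ₗ[ℂ] W₁) (L₂ : V →ₗ[ℂ] W₂) (L₃ : V →ₗ[ℂ] W₃),
        deriv (fun t : ℂ =>
          LinearMap.trace ℂ V
            ((B₁ + t • C₁) ∘ₗ
              ((B₂ + t • C₂) ∘ₗ (B₃ + t • C₃) - (B₃ + t • C₃) ∘ₗ (B₂ + t • C₂)))
          + LinearMap.trace ℂ V (((B₁ + t • C₁) ∘ₗ (I₁ + t • K₁)) ∘ₗ (J₁ + t • L₁))
          + LinearMap.trace ℂ V (((B₂ + t • C₂) ∘ₗ (I₂ + t • K₂)) ∘ₗ (J₂ + t • L₂))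
          + LinearMap.trace ℂ V (((B₃ + t • C₃) ∘ₗ (I₃ + t • K₃)) ∘ₗ (J₃ + t • L₃))) 0 = 0)
      ↔ (B₂ ∘ₗ B₃ - B₃ ∘ₗ B₂ + I₁ ∘ₗ J₁ = 0 ∧
         B₃ ∘ₗ B₁ - B₁ ∘ₗ B₃ + I₂ ∘ₗ J₂ = 0 ∧
         B₁ ∘ₗ B₂ - B₂ ∘ₗ B₁ + I₃ ∘ₗ J₃ = 0 ∧
         J₁ ∘ₗ B₁ = 0 ∧ J₂ ∘ₗ B₂ = 0 ∧ J₃ ∘ₗ B₃ = 0 ∧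
         B₁ ∘ₗ I₁ = 0 ∧ B₂ ∘ₗ I₂ = 0 ∧ B₃ ∘ₗ I₃ = 0) := by
  have hdW := fun C₁ C₂ C₃ K₁ K₂ K₃ L₁ L₂ L₃ => (hasDerivAt_spikedPotential_line
    B₁ B₂ B₃ C₁ C₂ C₃ I₁ K₁ I₂ K₂ I₃ K₃ J₁ L₁ J₂ L₂ J₃ L₃).deriv
  simp only [spikedPotential] at hdW
  simp only [hdW]
  refine ⟨fun h => ⟨?_, ?_, ?_, ?_, ?_, ?_, ?_, ?_, ?_⟩, fun h => by simp [h]⟩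
  all_goals refine (forall_trace_comp_eq_zero_iff _).1 fun g => ?_
  · simpa using h g 0 0 0 0 0 0 0 0
  · simpa using h 0 g 0 0 0 0 0 0 0
  · simpa using h 0 0 g 0 0 0 0 0 0
  · simpa using h 0 0 0 g 0 0 0 0 0
  · simpa using h 0 0 0 0 g 0 0 0 0
  · simpa using h 0 0 0 0 0 g 0 0 0
  · simpa using h 0 0 0 0 0 0 g 0 0
  · simpa using h 0 0 0 0 0 0 0 g 0
  · simpa using h 0 0 0 0 0 0 0 0 g
end

section
/- Let V and W be finite-dimensional vector spaces over a field k, let B1, B2, B3 ∈ End(V) and I ∈ Hom(W,V). Assume B3∘B1 = B1∘B3, B3∘B2 = B2∘B3, and B3∘I = 0. If the smallest subspace of V containing the image of I and invariant under B1, B2 and B3 is V itself, then B3 = 0. -/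
theorem LinearMap.apply_mem_ker_of_comp_eq_comp {R M M₂ : Type*} [Semiring R]
    [AddCommMonoid M] [AddCommMonoid M₂] [Module R M] [Module R M₂]
    {f : M →ₗ[R] M₂} {g : M →ₗ[R] M} {g₂ : M₂ →ₗ[R] M₂} (hfg : f ∘ₗ g = g₂ ∘ₗ f)
    {x : M} (hx : x ∈ ker f) : g x ∈ ker f := by
  rw [mem_ker] at hx ⊢
  rw [← comp_apply, hfg, comp_apply, hx, map_zero]

theorem B3_vanishes_on_stable_locus_general
    (k : Type*) [Field k]
    (V W : Type*) [AddCommGroup V] [Module k V]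
    [AddCommGroup W] [Module k W]
    (B₁ B₂ B₃ : Module.End k V) (I : W →ₗ[k] V)
    (h31 : B₃ ∘ₗ B₁ = B₁ ∘ₗ B₃) (h32 : B₃ ∘ₗ B₂ = B₂ ∘ₗ B₃)
    (h3I : B₃ ∘ₗ I = 0)
    (hgen : ∀ p : Submodule k V, LinearMap.range I ≤ p →
        (∀ x ∈ p, B₁ x ∈ p) → (∀ x ∈ p, B₂ x ∈ p) → (∀ x ∈ p, B₃ x ∈ p) → p = ⊤) :
    B₃ = 0 := by
  refine LinearMap.ker_eq_top.mp <| hgen _ (LinearMap.range_le_ker_iff.mpr h3I) ?_ ?_ ?_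
  · exact fun _ => LinearMap.apply_mem_ker_of_comp_eq_comp h31
  · exact fun _ => LinearMap.apply_mem_ker_of_comp_eq_comp h32
  · exact fun _ => LinearMap.apply_mem_ker_of_comp_eq_comp rfl

/-- Let `V`, `W` be finite-dimensional vector spaces over a field `k`,
`B₁, B₂, B₃ ∈ End(V)`, `I ∈ Hom(W,V)`, with `B₃∘B₁ = B₁∘B₃`, `B₃∘B₂ = B₂∘B₃` and
`B₃∘I = 0`.  If the smallest subspace of `V` containing the image of `I` and invariant
under `B₁`, `B₂`, `B₃` is `V` itself, then `B₃ = 0`. -/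
theorem B3_vanishes_on_stable_locus
    (k : Type*) [Field k]
    (V W : Type*) [AddCommGroup V] [Module k V] [FiniteDimensional k V]
    [AddCommGroup W] [Module k W] [FiniteDimensional k W]
    (B₁ B₂ B₃ : Module.End k V) (I : W →ₗ[k] V)
    (h31 : B₃ ∘ₗ B₁ = B₁ ∘ₗ B₃) (h32 : B₃ ∘ₗ B₂ = B₂ ∘ₗ B₃)
    (h3I : B₃ ∘ₗ I = 0)
    (hgen : ∀ p : Submodule k V, LinearMap.range I ≤ p →
        (∀ x ∈ p, B₁ x ∈ p) → (∀ x ∈ p, B₂ x ∈ p) → (∀ x ∈ p, B₃ x ∈ p) → p = ⊤) :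
    B₃ = 0 :=
  B3_vanishes_on_stable_locus_general k V W B₁ B₂ B₃ I h31 h32 h3I hgen
end

section
/- Let V be a finite-dimensional vector space over a field k of characteristic zero, let B1, B2 ∈ End(V), and let I : k → V and J : V → k be linear maps satisfying the ADHM equation B1∘B2 − B2∘B1 + I∘J = 0. If the smallest subspace of V containing the image of I and invariant under B1 and B2 is V itself, then J = 0. -/
/-!
Write `v₀ = I 1`, `c = I ∘ₗ J` and `φ x = J (x v₀)`, so that `φ x = tr (x c)` and
`φ (x c y) = φ y * φ x`. By stability the vectors `w v₀`, for words `w` in `B₁, B₂`, span `V`,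
so it suffices that `φ` vanishes on words, which we show by induction on the length `n`. Since
`[B₁, B₂] = -c`, permuting the letters of a word of length `n` changes its `φ`-value by terms
`φ (u c w) = φ w * φ u` with `w` shorter, which vanish. For a word `x` of length `n` this gives
`φ x = tr (x [B₂, B₁]) = tr ([B₁, x] B₂)`; expanding `[B₁, x]` letter by letter, each
occurrence of `B₂` contributes `-φ` of a rearrangement of `x`, i.e. `-φ x`. So
`(1 + m) φ x = 0`, where `m` is the number of `B₂`s in `x`, and `φ x = 0` in characteristic zero.
-/

open LinearMap

section Words

variable {k V ι : Type*} [Field k] [AddCommGroup V] [Module k V]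

def wordEval (B : ι → Module.End k V) (w : List ι) : Module.End k V := (w.map B).prod

variable (B : ι → Module.End k V)

@[simp] lemma wordEval_nil : wordEval B [] = 1 := rfl

@[simp] lemma wordEval_cons (i : ι) (w : List ι) :
    wordEval B (i :: w) = B i * wordEval B w := List.prod_cons

@[simp] lemma wordEval_append (u w : List ι) :
    wordEval B (u ++ w) = wordEval B u * wordEval B w := by
  simp [wordEval]

lemma span_wordEval_eq_top {v : V}
    (hgen : ∀ p : Submodule k V, v ∈ p → (∀ i, ∀ x ∈ p, B i x ∈ p) → p = ⊤) :
    Submodule.span k (Set.range fun w => wordEval B w v) = ⊤ := by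
  refine hgen _ (Submodule.subset_span ⟨[], rfl⟩) fun i x hx => ?_
  have hinv : Submodule.span k (Set.range fun w => wordEval B w v) ≤
      (Submodule.span k (Set.range fun w => wordEval B w v)).comap (B i) := by
    rw [Submodule.span_le]
    rintro _ ⟨w, rfl⟩
    exact Submodule.subset_span ⟨i :: w, by simp⟩
  exact hinv hx

lemma apply_wordEval_append_eq_of_perm {W : Type*} [AddCommGroup W] [Module k W]
    (f : V →ₗ[k] W) (v : V) {c : Module.End k V}
    (hB : ∀ i j, ∃ s : k, B i * B j - B j * B i = s • c) {n : ℕ}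
    (hc : ∀ u w : List ι, u.length + w.length + 2 = n →
      f ((wordEval B u * c * wordEval B w) v) = 0)
    {l₁ l₂ : List ι} (h : l₁.Perm l₂) (u : List ι) (hlen : u.length + l₁.length = n) :
    f (wordEval B (u ++ l₁) v) = f (wordEval B (u ++ l₂) v) := by
  induction h generalizing u with
  | nil => rfl
  | cons i _ ih =>
    simpa using ih (u ++ [i]) (by simp at hlen ⊢; omega)
  | swap i j l =>
    obtain ⟨s, hs⟩ := hB j i
    have hdiff : wordEval B (u ++ j :: i :: l) - wordEval B (u ++ i :: j :: l) =
        s • (wordEval B u * c * wordEval B l) := by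
      rw [mul_assoc, ← mul_smul_comm, ← smul_mul_assoc, ← hs]
      simp only [wordEval_append, wordEval_cons]
      noncomm_ring
    rw [← sub_eq_zero, ← map_sub, ← LinearMap.sub_apply, hdiff, LinearMap.smul_apply,
      map_smul, hc u l (by simp at hlen; omega), smul_zero]
  | trans h₁₂ _ ih₁₂ ih₂₃ =>
    exact (ih₁₂ u hlen).trans (ih₂₃ u (h₁₂.length_eq ▸ hlen))

end Words

section ADHM

variable {k V : Type*} [Field k] [AddCommGroup V] [Module k V]
variable (I : k →ₗ[k] V) (J : V →ₗ[k] k)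

lemma trace_mul_comp [FiniteDimensional k V] (x : Module.End k V) :
    trace k V (x * I ∘ₗ J) = J (x (I 1)) := by
  have hrank_one : x * I ∘ₗ J = J.smulRight (x (I 1)) := by
    ext v
    simp [← map_smul]
  rw [hrank_one, trace_smulRight]

lemma apply_mul_comp_mul_apply (x y : Module.End k V) :
    J ((x * I ∘ₗ J * y) (I 1)) = J (y (I 1)) * J (x (I 1)) := by
  have hI : I (J (y (I 1))) = J (y (I 1)) • I 1 := by rw [← map_smul, smul_eq_mul, mul_one]
  simp only [Module.End.mul_apply, comp_apply, hI, map_smul, smul_eq_mul]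

variable (B : Bool → Module.End k V)

lemma exists_commutator_eq_smul
    (hADHM : B false * B true - B true * B false + I ∘ₗ J = 0) (i j : Bool) :
    ∃ s : k, B i * B j - B j * B i = s • I ∘ₗ J := by
  have hc : B true * B false - B false * B true = I ∘ₗ J := by
    rw [← neg_sub, neg_eq_iff_add_eq_zero, hADHM]
  cases i <;> cases j
  · exact ⟨0, by simp⟩
  · exact ⟨-1, by rw [neg_one_smul, ← hc, neg_sub]⟩
  · exact ⟨1, by rw [one_smul, hc]⟩
  · exact ⟨0, by simp⟩

lemma trace_commutator_wordEval_mul [FiniteDimensional k V]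
    (hADHM : B false * B true - B true * B false + I ∘ₗ J = 0) {x : List Bool}
    (hx : ∀ l : List Bool, l.Perm x → J (wordEval B l (I 1)) = J (wordEval B x (I 1)))
    (w u : List Bool) (hwu : (w ++ u).Perm (x ++ [true])) :
    trace k V ((B false * wordEval B w - wordEval B w * B false) * wordEval B u) =
      -(w.count true) * J (wordEval B x (I 1)) := by
  induction w generalizing u with
  | nil => simp
  | cons a t ih =>
    have hexpand : (B false * wordEval B (a :: t) - wordEval B (a :: t) * B false) * wordEval B u =
        (B false * B a - B a * B false) * wordEval B (t ++ u) +
          B a * ((B false * wordEval B t - wordEval B t * B false) * wordEval B u) := by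
      simp only [wordEval_cons, wordEval_append]
      noncomm_ring
    have hrotate : trace k V (B a * ((B false * wordEval B t - wordEval B t * B false) *
        wordEval B u)) = -(t.count true) * J (wordEval B x (I 1)) := by
      have hsnoc : wordEval B (u ++ [a]) = wordEval B u * B a := by simp
      rw [trace_mul_comm, mul_assoc, ← hsnoc]
      exact ih _ (by rw [← List.append_assoc]; exact List.perm_append_comm.trans hwu)
    rw [hexpand, map_add, hrotate]
    cases a
    · simp
    · have hc : B false * B true - B true * B false = -(I ∘ₗ J) :=
        eq_neg_of_add_eq_zero_left hADHM
      have htu : (t ++ u).Perm x := (hwu.trans List.perm_append_comm).cons_inv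
      rw [hc, neg_mul, map_neg, trace_mul_comm, trace_mul_comp, hx _ htu, List.count_cons_self]
      push_cast
      ring

lemma apply_wordEval_eq_zero_of_perm_invariant [CharZero k] [FiniteDimensional k V]
    (hADHM : B false * B true - B true * B false + I ∘ₗ J = 0) {x : List Bool}
    (hx : ∀ l : List Bool, l.Perm x → J (wordEval B l (I 1)) = J (wordEval B x (I 1))) :
    J (wordEval B x (I 1)) = 0 := by
  have hc : I ∘ₗ J = B true * B false - B false * B true := by
    rw [← neg_sub, eq_neg_iff_add_eq_zero, add_comm, hADHM]
  have htrace : J (wordEval B x (I 1)) =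
      trace k V ((B false * wordEval B x - wordEval B x * B false) * wordEval B [true]) := by
    rw [← trace_mul_comp, hc]
    simp only [wordEval_cons, wordEval_nil, mul_one, mul_sub, sub_mul, map_sub, mul_assoc]
    rw [trace_mul_comm k (B false), mul_assoc]
  rw [trace_commutator_wordEval_mul I J B hADHM hx x [true] (List.Perm.refl _)] at htrace
  have hscaled : ((x.count true + 1 : ℕ) : k) * J (wordEval B x (I 1)) = 0 := by
    push_cast
    linear_combination htrace
  exact (mul_eq_zero.mp hscaled).resolve_left (Nat.cast_ne_zero.mpr (x.count true).succ_ne_zero)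

theorem apply_wordEval_eq_zero [CharZero k] [FiniteDimensional k V]
    (hADHM : B false * B true - B true * B false + I ∘ₗ J = 0) (x : List Bool) :
    J (wordEval B x (I 1)) = 0 := by
  induction hn : x.length using Nat.strong_induction_on generalizing x with
  | _ n ih =>
    refine apply_wordEval_eq_zero_of_perm_invariant I J B hADHM fun l hl => ?_
    have hc (u w : List Bool) (hlen : u.length + w.length + 2 = n) :
        J ((wordEval B u * I ∘ₗ J * wordEval B w) (I 1)) = 0 := by
      rw [apply_mul_comp_mul_apply, ih w.length (by omega) w rfl, zero_mul]
    simpa using apply_wordEval_append_eq_of_perm B J (I 1) (exists_commutator_eq_smul I J B hADHM)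
      hc hl [] (by simp [hl.length_eq, hn])

end ADHM

/-- Let `V` be a finite-dimensional vector space over a field `k` of
characteristic zero, `B₁, B₂ ∈ End(V)`, `I : k → V`, `J : V → k` linear with
`B₁∘B₂ − B₂∘B₁ + I∘J = 0`.  If the smallest subspace of `V` containing the image of `I`
and invariant under `B₁` and `B₂` is `V` itself, then `J = 0`. -/
theorem J_vanishes_for_stable_rank_one_ADHM
    (k : Type*) [Field k] [CharZero k]
    (V : Type*) [AddCommGroup V] [Module k V] [FiniteDimensional k V]
    (B₁ B₂ : Module.End k V) (I : k →ₗ[k] V) (J : V →ₗ[k] k)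
    (hADHM : B₁ ∘ₗ B₂ - B₂ ∘ₗ B₁ + I ∘ₗ J = 0)
    (hgen : ∀ p : Submodule k V, LinearMap.range I ≤ p →
        (∀ x ∈ p, B₁ x ∈ p) → (∀ x ∈ p, B₂ x ∈ p) → p = ⊤) :
    J = 0 := by
  set B : Bool → Module.End k V := (cond · B₂ B₁)
  have hspan : Submodule.span k (Set.range fun w => wordEval B w (I 1)) = ⊤ := by
    refine span_wordEval_eq_top B fun p hI hB => hgen p ?_ (hB false) (hB true)
    rintro _ ⟨t, rfl⟩
    simpa [← map_smul] using p.smul_mem t hI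
  exact ext_on_range hspan fun w => by simpa using apply_wordEval_eq_zero I J B hADHM w
end

section
/- Let 𝒟 and 𝒟' be pretriangulated categories and F : 𝒟 → 𝒟' an exact (triangle-preserving) functor admitting a left adjoint L and a right adjoint R, and assume that L and R are fully faithful (equivalently, the unit id → F∘L and the counit F∘R → id are isomorphisms). Let 𝒞 ⊆ 𝒟 be the full subcategory of objects E such that F(E) is a zero object. Then for every object E of 𝒟, the cone of the counit morphism L F E → E lies in 𝒞 and the cocone (fiber) of the unit morphism E → R F E lies in 𝒞, and the inclusion functor 𝒞 → 𝒟 admits both a left adjoint (sending E to the cone of L F E → E) and a right adjoint (sending E to the cocone of E → R F E). -/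
/-!
Since `L` and `R` are fully faithful, the triangle identities make `F` invert the counit
`L F E ⟶ E` and the unit `E ⟶ R F E`; as `F` is exact, the third vertex of a triangle on the
counit and the first vertex of a triangle on the unit are killed by `F`. By adjunction, the
objects `L X` admit no nonzero maps to the kernel `𝒞` of `F` and the objects `R X` none from
it, and `𝒞` is stable under shifts. Hence in a triangle `L F E ⟶ E ⟶ Z ⟶ (L F E)⟦1⟧` the map
`E ⟶ Z` is a `𝒞`-reflection of `E`, and dually the fiber of `E ⟶ R F E` is a `𝒞`-coreflection.
-/

open CategoryTheory CategoryTheory.Limits CategoryTheory.Pretriangulated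

namespace CategoryTheory

section Kernel

variable {D D' : Type*} [Category D] [Category D']

lemma Adjunction.leftOrthogonal_obj_of_isZero_map [HasZeroMorphisms D] {L : D' ⥤ D}
    {F : D ⥤ D'} (adj : L ⊣ F) (X : D') :
    ObjectProperty.leftOrthogonal (fun E : D => IsZero (F.obj E)) (L.obj X) :=
  fun _ _ hY => (adj.homEquiv _ _).injective (IsZero.eq_of_tgt hY _ _)

lemma Adjunction.rightOrthogonal_obj_of_isZero_map [HasZeroMorphisms D] {F : D ⥤ D'}
    {R : D' ⥤ D} (adj : F ⊣ R) (X : D') :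
    ObjectProperty.rightOrthogonal (fun E : D => IsZero (F.obj E)) (R.obj X) :=
  fun _ _ hY => (adj.homEquiv _ _).symm.injective (IsZero.eq_of_src hY _ _)

lemma Functor.isStableUnderShift_isZero_map [HasZeroMorphisms D'] [HasShift D ℤ] [HasShift D' ℤ]
    [∀ n : ℤ, (shiftFunctor D' n).PreservesZeroMorphisms] (F : D ⥤ D') [F.CommShift ℤ] :
    ObjectProperty.IsStableUnderShift (fun E : D => IsZero (F.obj E)) ℤ where
  isStableUnderShiftBy n :=
    ⟨fun _ hE => ((shiftFunctor D' n).map_isZero hE).of_iso ((F.commShiftIso n).app _)⟩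

end Kernel

namespace ObjectProperty

variable {D : Type*} [Category D] [Preadditive D] [HasZeroObject D] [HasShift D ℤ]
  [∀ n : ℤ, (shiftFunctor D n).Additive] [Pretriangulated D] (P : ObjectProperty D)

lemma hasInitial_structuredArrow_ι_of_distTriang {A E Z : D} {f : A ⟶ E} {g : E ⟶ Z}
    {h : Z ⟶ A⟦(1 : ℤ)⟧} (hT : Triangle.mk f g h ∈ distTriang D) (hA : P.leftOrthogonal A)
    (hA₁ : P.leftOrthogonal (A⟦(1 : ℤ)⟧)) (hZ : P Z) :
    HasInitial (StructuredArrow E P.ι) := by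
  let Z' : StructuredArrow E P.ι := StructuredArrow.mk (Y := (⟨Z, hZ⟩ : P.FullSubcategory)) g
  have : ∀ Y, Nonempty (Z' ⟶ Y) := fun Y => by
    obtain ⟨u, hu⟩ := Triangle.yoneda_exact₂ _ hT Y.hom (hA _ Y.right.2)
    exact ⟨StructuredArrow.homMk (ObjectProperty.homMk u) hu.symm⟩
  have : ∀ Y, Subsingleton (Z' ⟶ Y) := fun Y => ⟨fun m m' => by
    have hmm' : g ≫ (m.right.hom - m'.right.hom) = 0 := by
      rw [Preadditive.comp_sub, sub_eq_zero]
      exact (StructuredArrow.w m).trans (StructuredArrow.w m').symm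
    obtain ⟨k, hk⟩ := Triangle.yoneda_exact₃ _ hT _ hmm'
    have hk0 : k = 0 := hA₁ k Y.right.2
    ext
    rw [← sub_eq_zero, hk, hk0, comp_zero]
    rfl⟩
  exact hasInitial_of_unique Z'

lemma hasTerminal_costructuredArrow_ι_of_distTriang {Z E B : D} {f : Z ⟶ E} {g : E ⟶ B}
    {h : B ⟶ Z⟦(1 : ℤ)⟧} (hT : Triangle.mk f g h ∈ distTriang D) (hB : P.rightOrthogonal B)
    (hB₁ : P.rightOrthogonal (B⟦(-1 : ℤ)⟧)) (hZ : P Z) :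
    HasTerminal (CostructuredArrow P.ι E) := by
  let Z' : CostructuredArrow P.ι E := CostructuredArrow.mk (Y := (⟨Z, hZ⟩ : P.FullSubcategory)) f
  have : ∀ Y, Nonempty (Y ⟶ Z') := fun Y => by
    obtain ⟨u, hu⟩ := Triangle.coyoneda_exact₂ _ hT Y.hom (hB _ Y.left.2)
    exact ⟨CostructuredArrow.homMk (ObjectProperty.homMk u) hu.symm⟩
  have : ∀ Y, Subsingleton (Y ⟶ Z') := fun Y => ⟨fun m m' => by
    have hmm' : (m.left.hom - m'.left.hom) ≫ f = 0 := by
      rw [Preadditive.sub_comp, sub_eq_zero]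
      exact (CostructuredArrow.w m).trans (CostructuredArrow.w m').symm
    obtain ⟨k, hk⟩ := Triangle.coyoneda_exact₂ _ (inv_rot_of_distTriang _ hT) _ hmm'
    have hk0 : k = 0 := hB₁ k Y.left.2
    ext
    rw [← sub_eq_zero, hk, hk0, zero_comp]
    rfl⟩
  exact hasTerminal_of_unique Z'

variable [P.IsStableUnderShift ℤ]

lemma isRightAdjoint_ι_of_distTriang
    (hP : ∀ E : D, ∃ (A Z : D) (f : A ⟶ E) (g : E ⟶ Z) (h : Z ⟶ A⟦(1 : ℤ)⟧),
      Triangle.mk f g h ∈ distTriang D ∧ P.leftOrthogonal A ∧ P Z) :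
    P.ι.IsRightAdjoint := by
  have : ∀ E, HasInitial (StructuredArrow E P.ι) := fun E => by
    obtain ⟨A, Z, f, g, h, hT, hA, hZ⟩ := hP E
    exact P.hasInitial_structuredArrow_ι_of_distTriang hT hA (P.leftOrthogonal.le_shift 1 _ hA) hZ
  exact isRightAdjointOfStructuredArrowInitials _

lemma isLeftAdjoint_ι_of_distTriang
    (hP : ∀ E : D, ∃ (Z B : D) (f : Z ⟶ E) (g : E ⟶ B) (h : B ⟶ Z⟦(1 : ℤ)⟧),
      Triangle.mk f g h ∈ distTriang D ∧ P.rightOrthogonal B ∧ P Z) :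
    P.ι.IsLeftAdjoint := by
  have : ∀ E, HasTerminal (CostructuredArrow P.ι E) := fun E => by
    obtain ⟨Z, B, f, g, h, hT, hB, hZ⟩ := hP E
    exact P.hasTerminal_costructuredArrow_ι_of_distTriang hT hB
      (P.rightOrthogonal.le_shift (-1) _ hB) hZ
  exact isLeftAdjoint_of_costructuredArrowTerminals _

end ObjectProperty

end CategoryTheory

/-- Let `F : D ⥤ D'` be an exact (triangulated) functor of
pretriangulated categories admitting a fully faithful left adjoint `L` and a fully
faithful right adjoint `R`, and let `𝒞 ⊆ D` be the full subcategory of objects `E` with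
`F(E) ≅ 0`.  Then for every `E` the cone of the counit `L F E ⟶ E` lies in `𝒞`, the
cocone (fiber) of the unit `E ⟶ R F E` lies in `𝒞`, and the inclusion `𝒞 ⥤ D` admits
both a left adjoint and a right adjoint. -/
theorem recollement_kernel_admits_adjoints
    {D : Type*} [Category D] [Preadditive D] [HasZeroObject D] [HasShift D ℤ]
    [∀ n : ℤ, (shiftFunctor D n).Additive] [Pretriangulated D]
    {D' : Type*} [Category D'] [Preadditive D'] [HasZeroObject D'] [HasShift D' ℤ]
    [∀ n : ℤ, (shiftFunctor D' n).Additive] [Pretriangulated D']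
    (F : D ⥤ D') [F.CommShift ℤ] [F.IsTriangulated]
    (L R : D' ⥤ D) (adjL : L ⊣ F) (adjR : F ⊣ R)
    [L.Full] [L.Faithful] [R.Full] [R.Faithful] :
    (∀ (E Z : D) (g : E ⟶ Z) (h : Z ⟶ (L.obj (F.obj E))⟦(1 : ℤ)⟧),
        Triangle.mk (adjL.counit.app E) g h ∈ (distTriang D) → IsZero (F.obj Z)) ∧
    (∀ (E Z : D) (f : Z ⟶ E) (h : R.obj (F.obj E) ⟶ Z⟦(1 : ℤ)⟧),
        Triangle.mk f (adjR.unit.app E) h ∈ (distTriang D) → IsZero (F.obj Z)) ∧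
    (ObjectProperty.ι (fun E : D => IsZero (F.obj E) : ObjectProperty D)).IsRightAdjoint ∧
    (ObjectProperty.ι (fun E : D => IsZero (F.obj E) : ObjectProperty D)).IsLeftAdjoint := by
  have := F.isStableUnderShift_isZero_map
  have cone_counit : ∀ (E Z : D) (g : E ⟶ Z) (h : Z ⟶ (L.obj (F.obj E))⟦(1 : ℤ)⟧),
      Triangle.mk (adjL.counit.app E) g h ∈ (distTriang D) → IsZero (F.obj Z) :=
    fun _ _ _ _ hT => Triangle.isZero₃_of_isIso₁ _ (F.map_distinguished _ hT)
      (inferInstanceAs (IsIso (F.map (adjL.counit.app _))))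
  have fiber_unit : ∀ (E Z : D) (f : Z ⟶ E) (h : R.obj (F.obj E) ⟶ Z⟦(1 : ℤ)⟧),
      Triangle.mk f (adjR.unit.app E) h ∈ (distTriang D) → IsZero (F.obj Z) :=
    fun _ _ _ _ hT => Triangle.isZero₁_of_isIso₂ _ (F.map_distinguished _ hT)
      (inferInstanceAs (IsIso (F.map (adjR.unit.app _))))
  refine ⟨cone_counit, fiber_unit, ?_, ?_⟩
  · refine ObjectProperty.isRightAdjoint_ι_of_distTriang _ fun E => ?_
    obtain ⟨Z, g, h, hT⟩ := distinguished_cocone_triangle (adjL.counit.app E)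
    exact ⟨_, Z, _, g, h, hT, adjL.leftOrthogonal_obj_of_isZero_map _, cone_counit E Z g h hT⟩
  · refine ObjectProperty.isLeftAdjoint_ι_of_distTriang _ fun E => ?_
    obtain ⟨Z, f, h, hT⟩ := distinguished_cocone_triangle₁ (adjR.unit.app E)
    exact ⟨Z, _, f, _, h, hT, adjR.rightOrthogonal_obj_of_isZero_map _, fiber_unit E Z f h hT⟩
end

section
/- In the polynomial ring ℤ[X], for all natural numbers d and r with d ≤ r, the congruence ∏_{j=0}^{r−1} ∏_{k=1}^{d} (1 + X^{j+k})² · ∏_{n=1}^{d} (1 − X^n)^{2n} ≡ ∏_{n=1}^{d} (1 + X^n)^{2n} · ∏_{j=0}^{r−1} ∏_{k=1}^{d} (1 − X^{j+k})² holds modulo the ideal generated by X^{d+1}. -/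
/-!
Modulo `X^{d+1}` every factor `1 ± X^m` with `m > d` is `1`, and for `n ≤ d ≤ r` the monomial
`X^n` arises as `X^{j+k}` with `j < r`, `1 ≤ k ≤ d` for exactly `n` pairs `(j, k)`. Hence both
truncated double products collapse to `∏_{n=1}^{d} (1 ± X^n)^{2n}`, and the two sides of the
congruence become the same product written in the two orders.
-/

open Polynomial Finset

lemma prod_Icc_add_left {M : Type*} [CommMonoid M] (g : ℕ → M) (a b c : ℕ) :
    ∏ k ∈ Icc a b, g (c + k) = ∏ n ∈ Icc (c + a) (c + b), g n := by
  rw [← map_add_left_Icc, prod_map]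
  rfl

lemma prod_range_prod_Icc_add_eq_prod_pow {M : Type*} [CommMonoid M] {d r : ℕ} (h : d ≤ r)
    (g : ℕ → M) (hg : ∀ m, d < m → g m = 1) :
    ∏ j ∈ range r, ∏ k ∈ Icc 1 d, g (j + k) = ∏ n ∈ Icc 1 d, g n ^ n := by
  calc ∏ j ∈ range r, ∏ k ∈ Icc 1 d, g (j + k)
      = ∏ j ∈ range r, ∏ n ∈ Icc (j + 1) d, g n := by
        refine prod_congr rfl fun j _ => ?_
        rw [prod_Icc_add_left]
        refine (prod_subset (Icc_subset_Icc le_rfl (by omega)) fun n hn hnd => hg n ?_).symm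
        simp only [mem_Icc] at hn hnd
        omega
    _ = ∏ n ∈ Icc 1 d, ∏ _j ∈ range n, g n :=
        prod_comm' fun j n => by simp only [mem_range, mem_Icc]; omega
    _ = ∏ n ∈ Icc 1 d, g n ^ n := by simp only [prod_const, card_range]

lemma prod_range_prod_Icc_apply_pow_add {R M : Type*} [MonoidWithZero R] [CommMonoid M]
    {d r : ℕ} (h : d ≤ r) {x : R} (hx : x ^ (d + 1) = 0) (f : R → M) (hf : f 0 = 1) :
    ∏ j ∈ range r, ∏ k ∈ Icc 1 d, f (x ^ (j + k)) = ∏ n ∈ Icc 1 d, f (x ^ n) ^ n :=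
  prod_range_prod_Icc_add_eq_prod_pow h (fun m => f (x ^ m)) fun _ hm => by
    rw [pow_eq_zero_of_le hm hx, hf]

/-- In `ℤ[X]`, for all `d ≤ r`,
`∏_{j=0}^{r−1} ∏_{k=1}^{d} (1 + X^{j+k})² · ∏_{n=1}^{d} (1 − X^n)^{2n} ≡
 ∏_{n=1}^{d} (1 + X^n)^{2n} · ∏_{j=0}^{r−1} ∏_{k=1}^{d} (1 − X^{j+k})²`
modulo the ideal generated by `X^{d+1}`.  (Stabilization of the vacuum characters of the
rectangular `W`-superalgebras `W(gl_{r|r})` to the `N=2` super-`W_{1+∞}` character.) -/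
theorem super_macmahon_character_stabilization (d r : ℕ) (h : d ≤ r) :
    ((∏ j ∈ range r, ∏ k ∈ Icc 1 d, (1 + (X : ℤ[X]) ^ (j + k)) ^ 2) *
        ∏ n ∈ Icc 1 d, (1 - (X : ℤ[X]) ^ n) ^ (2 * n)) ≡
      ((∏ n ∈ Icc 1 d, (1 + (X : ℤ[X]) ^ n) ^ (2 * n)) *
        ∏ j ∈ range r, ∏ k ∈ Icc 1 d, (1 - (X : ℤ[X]) ^ (j + k)) ^ 2)
      [SMOD (Ideal.span {(X : ℤ[X]) ^ (d + 1)} : Ideal ℤ[X])] := by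
  rw [SModEq.sub_mem, ← Ideal.Quotient.eq]
  set x := Ideal.Quotient.mk (Ideal.span {(X : ℤ[X]) ^ (d + 1)}) X
  have hx : x ^ (d + 1) = 0 := by
    rw [← map_pow, Ideal.Quotient.eq_zero_iff_mem]
    exact Ideal.mem_span_singleton_self _
  simp only [map_mul, map_prod, map_pow, map_add, map_sub, map_one]
  rw [prod_range_prod_Icc_apply_pow_add h hx (fun y => (1 + y) ^ 2) (by simp),
    prod_range_prod_Icc_apply_pow_add h hx (fun y => (1 - y) ^ 2) (by simp)]
  simp only [← pow_mul]
  ring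
end
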